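/- arXiv:2305.10965 — 3 statements merged into one kernel-verified Lean document; each statement's English description precedes it below -/
import Mathlib

section
/- In the conjugate gradient algorithm applied to A x = b with symmetric positive definite A, the search directions are pairwise A-orthogonal: p_iᵀ A p_j = 0 for all i ≠ j with i, j ≤ K. -/
/-!
Induction on the step `m`, with invariant: `r_m ⊥ p_i` and `p_m ⊥_A p_i` for all `i < m`.
Since `r_0 = p_0` and `r_{j+1} = p_{j+1} - β_{j+1} p_j`, orthogonality to `p_0, …, p_m` implies
orthogonality to `r_0, …, r_m`. The update `r_{m+1} = r_m - γ_m A p_m` with the choice of `γ_m`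
gives `r_{m+1} ⊥ p_i` for `i ≤ m`; and since `γ_i A p_i = r_i - r_{i+1}`, the residual `r_{m+1}` is
`A`-orthogonal to `p_i` for `i < m`, while the choice of `β_{m+1}` cancels the remaining term
against `p_m`.
-/

open Matrix

variable {ι : Type*} [Fintype ι]

theorem Matrix.IsSymm.dotProduct_mulVec_comm {R : Type*} [CommSemiring R] {A : Matrix ι ι R}
    (hA : A.IsSymm) (u v : ι → R) : u ⬝ᵥ A *ᵥ v = v ⬝ᵥ A *ᵥ u := by
  rw [dotProduct_mulVec, ← mulVec_transpose, hA.eq, dotProduct_comm]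

variable {𝕜 : Type*} [Field 𝕜]

noncomputable def cgStepSize (A : Matrix ι ι 𝕜) (r p : ι → 𝕜) : 𝕜 :=
  (r ⬝ᵥ r) / (p ⬝ᵥ A *ᵥ p)

theorem Matrix.PosDef.cgStepSize_ne_zero {A : Matrix ι ι ℝ} (hA : A.PosDef) {r p : ι → ℝ}
    (hr : r ≠ 0) (hp : p ≠ 0) : cgStepSize A r p ≠ 0 :=
  div_ne_zero (by simpa using hr) (hA.dotProduct_mulVec_pos hp).ne'

-- The iterates `x_k` do not enter the recurrence for the residuals and directions.
structure IsCGSequence (A : Matrix ι ι 𝕜) (rs ps : ℕ → ι → 𝕜) : Prop where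
  dir_zero : ps 0 = rs 0
  res_succ : ∀ k, rs (k + 1) = rs k - cgStepSize A (rs k) (ps k) • A *ᵥ ps k
  dir_succ : ∀ k, ps (k + 1) = rs (k + 1) + ((rs (k + 1) ⬝ᵥ rs (k + 1)) / (rs k ⬝ᵥ rs k)) • ps k

namespace IsCGSequence

variable {A : Matrix ι ι 𝕜} {rs ps : ℕ → ι → 𝕜}

theorem cgStepSize_smul_mulVec (h : IsCGSequence A rs ps) (k : ℕ) :
    cgStepSize A (rs k) (ps k) • A *ᵥ ps k = rs k - rs (k + 1) := by
  rw [h.res_succ k, sub_sub_cancel]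

theorem dotProduct_res_eq_zero {v : ι → 𝕜} (h : IsCGSequence A rs ps) {m : ℕ}
    (hv : ∀ i ≤ m, v ⬝ᵥ ps i = 0) : ∀ i ≤ m, v ⬝ᵥ rs i = 0
  | 0, _ => by rw [← h.dir_zero]; exact hv 0 m.zero_le
  | j + 1, hj => by
    have hr : rs (j + 1) =
        ps (j + 1) - ((rs (j + 1) ⬝ᵥ rs (j + 1)) / (rs j ⬝ᵥ rs j)) • ps j := by
      rw [h.dir_succ j, add_sub_cancel_right]
    rw [hr, dotProduct_sub, dotProduct_smul, hv (j + 1) hj, hv j (by omega), smul_zero, sub_zero]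

theorem res_dotProduct_dir_self (h : IsCGSequence A rs ps) {m : ℕ}
    (hm : ∀ i < m, rs m ⬝ᵥ ps i = 0) : rs m ⬝ᵥ ps m = rs m ⬝ᵥ rs m := by
  cases m with
  | zero => rw [h.dir_zero]
  | succ k =>
    rw [h.dir_succ k, dotProduct_add, dotProduct_smul, hm k k.lt_succ_self, smul_zero, add_zero]

theorem res_succ_dotProduct_dir_eq_zero (h : IsCGSequence A rs ps) (hA : A.IsSymm) {m : ℕ}
    (hγ : cgStepSize A (rs m) (ps m) ≠ 0)
    (hres : ∀ i < m, rs m ⬝ᵥ ps i = 0) (hdir : ∀ i < m, ps m ⬝ᵥ A *ᵥ ps i = 0) :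
    ∀ i ≤ m, rs (m + 1) ⬝ᵥ ps i = 0 := by
  intro i hi
  have hexp : rs (m + 1) ⬝ᵥ ps i
      = rs m ⬝ᵥ ps i - cgStepSize A (rs m) (ps m) * (ps m ⬝ᵥ A *ᵥ ps i) := by
    rw [h.res_succ m, sub_dotProduct, smul_dotProduct, smul_eq_mul, dotProduct_comm (A *ᵥ ps m),
      hA.dotProduct_mulVec_comm (ps i)]
  rcases hi.lt_or_eq with hi | rfl
  · rw [hexp, hres i hi, hdir i hi, mul_zero, sub_zero]
  · rw [hexp, h.res_dotProduct_dir_self hres, cgStepSize,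
      div_mul_cancel₀ _ (div_ne_zero_iff.mp hγ).2, sub_self]

theorem dir_succ_dotProduct_mulVec_dir_eq_zero (h : IsCGSequence A rs ps) {m : ℕ}
    (hγ : ∀ i ≤ m, cgStepSize A (rs i) (ps i) ≠ 0)
    (hres : ∀ i ≤ m, rs (m + 1) ⬝ᵥ ps i = 0) (hdir : ∀ i < m, ps m ⬝ᵥ A *ᵥ ps i = 0) :
    ∀ i ≤ m, ps (m + 1) ⬝ᵥ A *ᵥ ps i = 0 := by
  have horth := h.dotProduct_res_eq_zero hres
  have hγApi (i : ℕ) : cgStepSize A (rs i) (ps i) * (rs (m + 1) ⬝ᵥ A *ᵥ ps i)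
      = rs (m + 1) ⬝ᵥ rs i - rs (m + 1) ⬝ᵥ rs (i + 1) := by
    rw [← smul_eq_mul, ← dotProduct_smul, h.cgStepSize_smul_mulVec, dotProduct_sub]
  intro i hi
  refine (mul_eq_zero.mp ?_).resolve_left (hγ i hi)
  rw [h.dir_succ m, add_dotProduct, smul_dotProduct, smul_eq_mul, mul_add, hγApi]
  rcases hi.lt_or_eq with hi | rfl
  · rw [horth i hi.le, horth (i + 1) hi, hdir i hi]
    ring
  · have hrr : rs i ⬝ᵥ rs i ≠ 0 := (div_ne_zero_iff.mp (hγ i le_rfl)).1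
    have hpAp : ps i ⬝ᵥ A *ᵥ ps i ≠ 0 := (div_ne_zero_iff.mp (hγ i le_rfl)).2
    rw [horth i le_rfl, cgStepSize]
    field_simp
    ring

theorem orthogonal_of_lt (h : IsCGSequence A rs ps) (hA : A.IsSymm) {K : ℕ}
    (hγ : ∀ i ≤ K, cgStepSize A (rs i) (ps i) ≠ 0) :
    ∀ m ≤ K, (∀ i < m, rs m ⬝ᵥ ps i = 0) ∧ (∀ i < m, ps m ⬝ᵥ A *ᵥ ps i = 0) := by
  intro m hm
  induction m with
  | zero => simp
  | succ m ih =>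
    obtain ⟨hres, hdir⟩ := ih (by omega)
    have hres' := h.res_succ_dotProduct_dir_eq_zero hA (hγ m (by omega)) hres hdir
    have hdir' := h.dir_succ_dotProduct_mulVec_dir_eq_zero (fun i hi ↦ hγ i (by omega)) hres' hdir
    exact ⟨fun i hi ↦ hres' i (by omega), fun i hi ↦ hdir' i (by omega)⟩

theorem dir_dotProduct_mulVec_dir_eq_zero (h : IsCGSequence A rs ps) (hA : A.IsSymm) {K : ℕ}
    (hγ : ∀ i ≤ K, cgStepSize A (rs i) (ps i) ≠ 0) {i j : ℕ} (hi : i ≤ K) (hj : j ≤ K)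
    (hij : i ≠ j) : ps i ⬝ᵥ A *ᵥ ps j = 0 := by
  rcases hij.lt_or_gt with hij | hij
  · rw [hA.dotProduct_mulVec_comm]
    exact (h.orthogonal_of_lt hA hγ j hj).2 i hij
  · exact (h.orthogonal_of_lt hA hγ i hi).2 j hij

end IsCGSequence

theorem cg_directions_A_orthogonal_general
    (n : ℕ) (A : Matrix (Fin n) (Fin n) ℝ) (hA : A.PosDef)
    (rs ps : ℕ → Fin n → ℝ) (K : ℕ)
    (hp0 : ps 0 = rs 0)
    (hrs : ∀ k : ℕ, rs (k + 1) =
      rs k - ((rs k ⬝ᵥ rs k) / (ps k ⬝ᵥ (A *ᵥ ps k))) • (A *ᵥ ps k))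
    (hps : ∀ k : ℕ, ps (k + 1) =
      rs (k + 1) + ((rs (k + 1) ⬝ᵥ rs (k + 1)) / (rs k ⬝ᵥ rs k)) • ps k)
    (hbd : ∀ j ≤ K, rs j ≠ 0 ∧ ps j ≠ 0) :
    ∀ i ≤ K, ∀ j ≤ K, i ≠ j → ps i ⬝ᵥ (A *ᵥ ps j) = 0 := by
  have hcg : IsCGSequence A rs ps := ⟨hp0, hrs, hps⟩
  have hsymm : A.IsSymm := isHermitian_iff_isSymm.mp hA.isHermitian
  have hγ (j : ℕ) (hj : j ≤ K) : cgStepSize A (rs j) (ps j) ≠ 0 :=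
    hA.cgStepSize_ne_zero (hbd j hj).1 (hbd j hj).2
  intro i hi j hj hij
  exact hcg.dir_dotProduct_mulVec_dir_eq_zero hsymm hγ hi hj hij

/-- In CG, the search directions are pairwise A-orthogonal. -/
theorem cg_directions_A_orthogonal
    (n : ℕ) (A : Matrix (Fin n) (Fin n) ℝ) (hA : A.PosDef)
    (b x : Fin n → ℝ) (hx : A *ᵥ x = b)
    (xs rs ps : ℕ → Fin n → ℝ) (K : ℕ)
    (hr0 : rs 0 = b - A *ᵥ xs 0) (hp0 : ps 0 = rs 0)
    (hxs : ∀ k : ℕ, xs (k + 1) =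
      xs k + ((rs k ⬝ᵥ rs k) / (ps k ⬝ᵥ (A *ᵥ ps k))) • ps k)
    (hrs : ∀ k : ℕ, rs (k + 1) =
      rs k - ((rs k ⬝ᵥ rs k) / (ps k ⬝ᵥ (A *ᵥ ps k))) • (A *ᵥ ps k))
    (hps : ∀ k : ℕ, ps (k + 1) =
      rs (k + 1) + ((rs (k + 1) ⬝ᵥ rs (k + 1)) / (rs k ⬝ᵥ rs k)) • ps k)
    (hbd : ∀ j ≤ K, rs j ≠ 0 ∧ ps j ≠ 0) :
    ∀ i ≤ K, ∀ j ≤ K, i ≠ j → ps i ⬝ᵥ (A *ᵥ ps j) = 0 :=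
  cg_directions_A_orthogonal_general n A hA rs ps K hp0 hrs hps hbd
end

section
/- In the conjugate gradient algorithm applied to A x = b with symmetric positive definite A, each residual is orthogonal to all previous search directions and aligned with the current one: r_kᵀ p_j = 0 for all j < k ≤ K, and p_kᵀ r_k = r_kᵀ r_k for all k ≤ K. -/
open Matrix

/-!
Induct on `k` with the stronger invariant that `r_k` is orthogonal to `p_0, …, p_{k-1}` and `p_k`
is `A`-conjugate to them. The step length `γ_k` is exactly the one that makes `r_{k+1} ⊥ p_k`, and
then `r_{k+1}` is orthogonal to every `r_j = p_j - β_j p_{j-1}` with `j ≤ k`. Since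
`γ_j A p_j = r_j - r_{j+1}`, this makes `r_{k+1}` conjugate to `p_0, …, p_{k-1}`, and `β_{k+1}` is
exactly the coefficient that makes `p_{k+1}` conjugate to `p_k` as well.
-/

variable {ι 𝕜 : Type*} [Fintype ι] [Field 𝕜]

theorem Matrix.IsSymm.mulVec_dotProduct {A : Matrix ι ι 𝕜} (hA : A.IsSymm) (v w : ι → 𝕜) :
    (A *ᵥ v) ⬝ᵥ w = v ⬝ᵥ (A *ᵥ w) := by
  rw [dotProduct_comm, dotProduct_mulVec, ← mulVec_transpose, hA.eq, dotProduct_comm]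

structure IsCGIteration (A : Matrix ι ι 𝕜) (rs ps : ℕ → ι → 𝕜) : Prop where
  direction_zero : ps 0 = rs 0
  residual_succ : ∀ k, rs (k + 1) =
    rs k - ((rs k ⬝ᵥ rs k) / (ps k ⬝ᵥ (A *ᵥ ps k))) • (A *ᵥ ps k)
  direction_succ : ∀ k, ps (k + 1) =
    rs (k + 1) + ((rs (k + 1) ⬝ᵥ rs (k + 1)) / (rs k ⬝ᵥ rs k)) • ps k

namespace IsCGIteration

variable {A : Matrix ι ι 𝕜} {rs ps : ℕ → ι → 𝕜}

theorem dotProduct_direction_self (hcg : IsCGIteration A rs ps) {k : ℕ}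
    (horth : ∀ j < k, rs k ⬝ᵥ ps j = 0) : rs k ⬝ᵥ ps k = rs k ⬝ᵥ rs k := by
  cases k with
  | zero => rw [hcg.direction_zero]
  | succ m =>
    rw [hcg.direction_succ m, dotProduct_add, dotProduct_smul, horth m m.lt_succ_self,
      smul_zero, add_zero]

theorem dotProduct_residual_eq_zero (hcg : IsCGIteration A rs ps) {v : ι → 𝕜} {m : ℕ}
    (hv : ∀ j ≤ m, v ⬝ᵥ ps j = 0) : v ⬝ᵥ rs m = 0 := by
  cases m with
  | zero => rw [← hcg.direction_zero]; exact hv 0 le_rfl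
  | succ m =>
    rw [eq_sub_of_add_eq (hcg.direction_succ m).symm, dotProduct_sub, dotProduct_smul,
      hv (m + 1) le_rfl, hv m m.le_succ, smul_zero, sub_zero]

theorem step_mul_dotProduct_mulVec (hcg : IsCGIteration A rs ps) (v : ι → 𝕜) (j : ℕ) :
    (rs j ⬝ᵥ rs j) / (ps j ⬝ᵥ (A *ᵥ ps j)) * (v ⬝ᵥ (A *ᵥ ps j)) =
      v ⬝ᵥ rs j - v ⬝ᵥ rs (j + 1) := by
  rw [hcg.residual_succ j, dotProduct_sub, dotProduct_smul, smul_eq_mul, sub_sub_cancel]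

theorem residual_succ_dotProduct_direction (hcg : IsCGIteration A rs ps) (hA : A.IsSymm)
    {k : ℕ} (hpk : ps k ⬝ᵥ (A *ᵥ ps k) ≠ 0) (horth : ∀ j < k, rs k ⬝ᵥ ps j = 0)
    (hconj : ∀ j < k, ps k ⬝ᵥ (A *ᵥ ps j) = 0) :
    ∀ j ≤ k, rs (k + 1) ⬝ᵥ ps j = 0 := by
  intro j hj
  rw [hcg.residual_succ k, sub_dotProduct, smul_dotProduct, hA.mulVec_dotProduct]
  rcases hj.lt_or_eq with hjk | rfl
  · rw [horth j hjk, hconj j hjk, smul_zero, sub_zero]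
  · rw [hcg.dotProduct_direction_self horth, smul_eq_mul, div_mul_cancel₀ _ hpk, sub_self]

theorem direction_succ_dotProduct_mulVec (hcg : IsCGIteration A rs ps) {k : ℕ}
    (hnd : ∀ j ≤ k, rs j ⬝ᵥ rs j ≠ 0 ∧ ps j ⬝ᵥ (A *ᵥ ps j) ≠ 0)
    (hconj : ∀ j < k, ps k ⬝ᵥ (A *ᵥ ps j) = 0)
    (hr : ∀ j ≤ k, rs (k + 1) ⬝ᵥ rs j = 0) :
    ∀ j ≤ k, ps (k + 1) ⬝ᵥ (A *ᵥ ps j) = 0 := by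
  intro j hj
  have hstep := hcg.step_mul_dotProduct_mulVec (rs (k + 1)) j
  rw [hr j hj] at hstep
  rw [hcg.direction_succ k, add_dotProduct, smul_dotProduct, smul_eq_mul]
  rcases hj.lt_or_eq with hjk | rfl
  · have hγ := div_ne_zero (hnd j hj).1 (hnd j hj).2
    rw [hr (j + 1) hjk, sub_zero, mul_eq_zero, or_iff_right hγ] at hstep
    rw [hstep, hconj j hjk, mul_zero, add_zero]
  · -- `hstep` says `γ_j (r_{j+1} ⬝ A p_j) = -(r_{j+1} ⬝ r_{j+1})`
    obtain ⟨hrj, hpj⟩ := hnd j le_rfl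
    field_simp at hstep ⊢
    linear_combination hstep

theorem orthogonal_and_conjugate (hcg : IsCGIteration A rs ps) (hA : A.IsSymm) {K : ℕ}
    (hnd : ∀ j < K, rs j ⬝ᵥ rs j ≠ 0 ∧ ps j ⬝ᵥ (A *ᵥ ps j) ≠ 0) :
    ∀ k ≤ K, (∀ j < k, rs k ⬝ᵥ ps j = 0) ∧ (∀ j < k, ps k ⬝ᵥ (A *ᵥ ps j) = 0) := by
  intro k hk
  induction k with
  | zero => simp
  | succ k ih =>
    obtain ⟨horth, hconj⟩ := ih (k.le_succ.trans hk)
    have hndk : ∀ j ≤ k, rs j ⬝ᵥ rs j ≠ 0 ∧ ps j ⬝ᵥ (A *ᵥ ps j) ≠ 0 :=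
      fun j hj => hnd j (hj.trans_lt hk)
    have horth' := hcg.residual_succ_dotProduct_direction hA (hndk k le_rfl).2 horth hconj
    have hr : ∀ j ≤ k, rs (k + 1) ⬝ᵥ rs j = 0 := fun j hj =>
      hcg.dotProduct_residual_eq_zero fun i hi => horth' i (hi.trans hj)
    exact ⟨fun j hj => horth' j (Nat.le_of_lt_succ hj),
      fun j hj => hcg.direction_succ_dotProduct_mulVec hndk hconj hr j (Nat.le_of_lt_succ hj)⟩

end IsCGIteration

theorem cg_residual_orthogonal_to_directions_general
    (n : ℕ) (A : Matrix (Fin n) (Fin n) ℝ) (hA : A.PosDef)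
    (rs ps : ℕ → Fin n → ℝ) (K : ℕ)
    (hp0 : ps 0 = rs 0)
    (hrs : ∀ k : ℕ, rs (k + 1) =
      rs k - ((rs k ⬝ᵥ rs k) / (ps k ⬝ᵥ (A *ᵥ ps k))) • (A *ᵥ ps k))
    (hps : ∀ k : ℕ, ps (k + 1) =
      rs (k + 1) + ((rs (k + 1) ⬝ᵥ rs (k + 1)) / (rs k ⬝ᵥ rs k)) • ps k)
    (hbd : ∀ j ≤ K, rs j ≠ 0 ∧ ps j ≠ 0) :
    (∀ j k : ℕ, j < k → k ≤ K → rs k ⬝ᵥ ps j = 0) ∧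
    (∀ k ≤ K, ps k ⬝ᵥ rs k = rs k ⬝ᵥ rs k) := by
  have hcg : IsCGIteration A rs ps := ⟨hp0, hrs, hps⟩
  have hsymm : A.IsSymm := isHermitian_iff_isSymm.mp hA.isHermitian
  have hnd : ∀ j < K, rs j ⬝ᵥ rs j ≠ 0 ∧ ps j ⬝ᵥ (A *ᵥ ps j) ≠ 0 := fun j hj =>
    ⟨dotProduct_self_eq_zero.not.mpr (hbd j hj.le).1,
      by simpa using (hA.dotProduct_mulVec_pos (hbd j hj.le).2).ne'⟩
  have hinv := hcg.orthogonal_and_conjugate hsymm hnd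
  refine ⟨fun j k hjk hk => (hinv k hk).1 j hjk, fun k hk => ?_⟩
  rw [dotProduct_comm]
  exact hcg.dotProduct_direction_self (hinv k hk).1

/-- In CG, each residual is orthogonal to all previous search directions and
aligned with the current one. -/
theorem cg_residual_orthogonal_to_directions
    (n : ℕ) (A : Matrix (Fin n) (Fin n) ℝ) (hA : A.PosDef)
    (b x : Fin n → ℝ) (hx : A *ᵥ x = b)
    (xs rs ps : ℕ → Fin n → ℝ) (K : ℕ)
    (hr0 : rs 0 = b - A *ᵥ xs 0) (hp0 : ps 0 = rs 0)
    (hxs : ∀ k : ℕ, xs (k + 1) =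
      xs k + ((rs k ⬝ᵥ rs k) / (ps k ⬝ᵥ (A *ᵥ ps k))) • ps k)
    (hrs : ∀ k : ℕ, rs (k + 1) =
      rs k - ((rs k ⬝ᵥ rs k) / (ps k ⬝ᵥ (A *ᵥ ps k))) • (A *ᵥ ps k))
    (hps : ∀ k : ℕ, ps (k + 1) =
      rs (k + 1) + ((rs (k + 1) ⬝ᵥ rs (k + 1)) / (rs k ⬝ᵥ rs k)) • ps k)
    (hbd : ∀ j ≤ K, rs j ≠ 0 ∧ ps j ≠ 0) :
    (∀ j k : ℕ, j < k → k ≤ K → rs k ⬝ᵥ ps j = 0) ∧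
    (∀ k ≤ K, ps k ⬝ᵥ rs k = rs k ⬝ᵥ rs k) :=
  cg_residual_orthogonal_to_directions_general n A hA rs ps K hp0 hrs hps hbd
end

section
/- In the conjugate gradient algorithm applied to A x = b with symmetric positive definite A, the A-norm of the error decreases at each step with explicit decrement: for every k with 1 ≤ k ≤ K, ‖x − x_k‖_A² = ‖x − x_{k−1}‖_A² − γ_{k−1} (r_{k−1}ᵀ r_{k−1}); in particular ‖x − x_k‖_A < ‖x − x_{k−1}‖_A. -/
open Matrix

/-!
Writing `e = x - xₖ` for the error, `A e = rₖ`, and the step `xₖ₊₁ = xₖ + γ pₖ` changes the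
energy `eᵀAe` by `-2γ pₖᵀrₖ + γ² pₖᵀApₖ`. Since `pₖ = rₖ + βₖ pₖ₋₁` and the exact line search
makes `rₖ` orthogonal to `pₖ₋₁`, we have `pₖᵀrₖ = rₖᵀrₖ`, and with `γ = rₖᵀrₖ / pₖᵀApₖ` the change
collapses to `-γ rₖᵀrₖ`, which is negative as long as the residual does not vanish.
-/

namespace ConjugateGradient

section CommRing

variable {ι R : Type*} [Fintype ι] [CommRing R]

lemma dotProduct_mulVec_comm {A : Matrix ι ι R} (hA : A.IsSymm) (u v : ι → R) :
    u ⬝ᵥ (A *ᵥ v) = v ⬝ᵥ (A *ᵥ u) := by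
  rw [← dotProduct_transpose_mulVec, hA.eq]

lemma sub_smul_dotProduct_mulVec_sub_smul {A : Matrix ι ι R} (hA : A.IsSymm)
    (e p : ι → R) (c : R) :
    (e - c • p) ⬝ᵥ (A *ᵥ (e - c • p)) =
      e ⬝ᵥ (A *ᵥ e) - 2 * c * (p ⬝ᵥ (A *ᵥ e)) + c ^ 2 * (p ⬝ᵥ (A *ᵥ p)) := by
  simp only [mulVec_sub, mulVec_smul, dotProduct_sub, sub_dotProduct, dotProduct_smul,
    smul_dotProduct, smul_eq_mul, dotProduct_mulVec_comm hA e p]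
  ring

lemma residual_eq_sub_mulVec {A : Matrix ι ι R} {b : ι → R} {xs rs ps : ℕ → ι → R}
    {γ : ℕ → R} (hr0 : rs 0 = b - A *ᵥ xs 0) (hxs : ∀ k, xs (k + 1) = xs k + γ k • ps k)
    (hrs : ∀ k, rs (k + 1) = rs k - γ k • (A *ᵥ ps k)) (k : ℕ) :
    rs k = b - A *ᵥ xs k := by
  induction k with
  | zero => exact hr0
  | succ k ih =>
    rw [hrs k, hxs k, ih, mulVec_add, mulVec_smul]
    abel

end CommRing

section Field

variable {ι R : Type*} [Fintype ι] [Field R]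

def stepSize (A : Matrix ι ι R) (r p : ι → R) : R :=
  (r ⬝ᵥ r) / (p ⬝ᵥ (A *ᵥ p))

lemma sub_stepSize_smul_mulVec_dotProduct_eq_zero {A : Matrix ι ι R} {r p : ι → R}
    (hrp : r ⬝ᵥ p = r ⬝ᵥ r) (hpAp : p ⬝ᵥ (A *ᵥ p) ≠ 0) :
    (r - stepSize A r p • (A *ᵥ p)) ⬝ᵥ p = 0 := by
  rw [sub_dotProduct, smul_dotProduct, hrp, dotProduct_comm (A *ᵥ p), smul_eq_mul, stepSize,
    div_mul_cancel₀ _ hpAp, sub_self]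

lemma residual_dotProduct_direction {A : Matrix ι ι R} {rs ps : ℕ → ι → R} {β : ℕ → R}
    (hp0 : ps 0 = rs 0)
    (hrs : ∀ k, rs (k + 1) = rs k - stepSize A (rs k) (ps k) • (A *ᵥ ps k))
    (hps : ∀ k, ps (k + 1) = rs (k + 1) + β k • ps k) {k : ℕ}
    (hpAp : ∀ j < k, ps j ⬝ᵥ (A *ᵥ ps j) ≠ 0) :
    rs k ⬝ᵥ ps k = rs k ⬝ᵥ rs k := by
  induction k with
  | zero => rw [hp0]
  | succ k ih =>
    have horth : rs (k + 1) ⬝ᵥ ps k = 0 := by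
      rw [hrs k]
      exact sub_stepSize_smul_mulVec_dotProduct_eq_zero
        (ih fun j hj => hpAp j (by omega)) (hpAp k k.lt_succ_self)
    rw [hps k, dotProduct_add, dotProduct_smul, horth, smul_zero, add_zero]

lemma energy_sub_stepSize_smul {A : Matrix ι ι R} (hA : A.IsSymm) {e r p : ι → R}
    (hAe : A *ᵥ e = r) (hrp : r ⬝ᵥ p = r ⬝ᵥ r) (hpAp : p ⬝ᵥ (A *ᵥ p) ≠ 0) :
    (e - stepSize A r p • p) ⬝ᵥ (A *ᵥ (e - stepSize A r p • p)) =
      e ⬝ᵥ (A *ᵥ e) - stepSize A r p * (r ⬝ᵥ r) := by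
  rw [sub_smul_dotProduct_mulVec_sub_smul hA, hAe, dotProduct_comm p r, hrp, stepSize]
  field_simp
  ring

end Field

end ConjugateGradient

open ConjugateGradient in
/-- In CG, the A-norm of the error decreases at each step with explicit decrement. -/
theorem cg_error_monotone_decrease
    (n : ℕ) (A : Matrix (Fin n) (Fin n) ℝ) (hA : A.PosDef)
    (b x : Fin n → ℝ) (hx : A *ᵥ x = b)
    (xs rs ps : ℕ → Fin n → ℝ) (K : ℕ)
    (hr0 : rs 0 = b - A *ᵥ xs 0) (hp0 : ps 0 = rs 0)
    (hxs : ∀ k : ℕ, xs (k + 1) =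
      xs k + ((rs k ⬝ᵥ rs k) / (ps k ⬝ᵥ (A *ᵥ ps k))) • ps k)
    (hrs : ∀ k : ℕ, rs (k + 1) =
      rs k - ((rs k ⬝ᵥ rs k) / (ps k ⬝ᵥ (A *ᵥ ps k))) • (A *ᵥ ps k))
    (hps : ∀ k : ℕ, ps (k + 1) =
      rs (k + 1) + ((rs (k + 1) ⬝ᵥ rs (k + 1)) / (rs k ⬝ᵥ rs k)) • ps k)
    (hbd : ∀ j ≤ K, rs j ≠ 0 ∧ ps j ≠ 0) :
    ∀ k : ℕ, k + 1 ≤ K →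
      ((x - xs (k + 1)) ⬝ᵥ (A *ᵥ (x - xs (k + 1))) =
        (x - xs k) ⬝ᵥ (A *ᵥ (x - xs k)) -
          ((rs k ⬝ᵥ rs k) / (ps k ⬝ᵥ (A *ᵥ ps k))) * (rs k ⬝ᵥ rs k)) ∧
      Real.sqrt ((x - xs (k + 1)) ⬝ᵥ (A *ᵥ (x - xs (k + 1)))) <
        Real.sqrt ((x - xs k) ⬝ᵥ (A *ᵥ (x - xs k))) := by
  have hpAp : ∀ j ≤ K, 0 < ps j ⬝ᵥ (A *ᵥ ps j) := fun j hj => by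
    simpa using hA.dotProduct_mulVec_pos (hbd j hj).2
  intro k hk
  have hrp : rs k ⬝ᵥ ps k = rs k ⬝ᵥ rs k :=
    residual_dotProduct_direction hp0 hrs hps fun j hj => (hpAp j (by omega)).ne'
  have hAe : A *ᵥ (x - xs k) = rs k := by
    rw [mulVec_sub, hx, residual_eq_sub_mulVec hr0 hxs hrs k]
  have key : (x - xs (k + 1)) ⬝ᵥ (A *ᵥ (x - xs (k + 1))) =
      (x - xs k) ⬝ᵥ (A *ᵥ (x - xs k)) - stepSize A (rs k) (ps k) * (rs k ⬝ᵥ rs k) := by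
    rw [hxs k, sub_add_eq_sub_sub]
    exact energy_sub_stepSize_smul (isHermitian_iff_isSymm.mp hA.isHermitian) hAe hrp
      (hpAp k (by omega)).ne'
  have hrr : 0 < rs k ⬝ᵥ rs k := by
    simpa using dotProduct_self_star_pos_iff.mpr (hbd k (by omega)).1
  have hγ : 0 < stepSize A (rs k) (ps k) := div_pos hrr (hpAp k (by omega))
  refine ⟨key, Real.sqrt_lt_sqrt (hA.posSemidef.dotProduct_mulVec_nonneg _) ?_⟩
  rw [key]
  exact sub_lt_self _ (mul_pos hγ hrr)
end
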